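/- arXiv:2403.13088 — 2 statements merged into one kernel-verified Lean document; each statement's English description precedes it below -/
import Mathlib

section
/- For a commutative ring R and a unimodular vector f₁,…,fₙ : R, the map sending g ∈ R to the family (g/1)ᵢ is an isomorphism from R onto the set of families xᵢ ∈ R[1/fᵢ] such that for all i, j the images of xᵢ and xⱼ in R[1/(fᵢfⱼ)] under the canonical maps agree. -/
/-!
Write the compatible family as fractions `xᵢ = rᵢ / fᵢᴺ` with a common exponent. Compatibility
says that `rᵢ fⱼᴺ` and `rⱼ fᵢᴺ` agree after multiplication by a power of `fᵢfⱼ`; absorbing a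
common such power into the `rᵢ` and `N` makes `rᵢ fⱼᴺ = rⱼ fᵢᴺ` hold in `R`. Since the `fᵢᴺ` still
generate the unit ideal, `1 = ∑ cⱼ fⱼᴺ`, and then `g = ∑ cⱼ rⱼ` satisfies `g fᵢᴺ = rᵢ`.
-/

open Localization

/-- The canonical map `R[1/fᵢ] → R[1/(fᵢfⱼ)]` induced by the universal property. -/
noncomputable def chiL {R : Type*} [CommRing R] {n : ℕ} (f : Fin n → R) (i j : Fin n) :
    Localization.Away (f i) →+* Localization.Away (f i * f j) :=
  Localization.awayLift (algebraMap R _) (f i)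
    (isUnit_of_mul_isUnit_left (y := algebraMap R (Localization.Away (f i * f j)) (f j))
      (by rw [← map_mul]; exact IsLocalization.Away.algebraMap_isUnit _))

/-- The canonical map `R[1/fⱼ] → R[1/(fᵢfⱼ)]` induced by the universal property. -/
noncomputable def chiR {R : Type*} [CommRing R] {n : ℕ} (f : Fin n → R) (i j : Fin n) :
    Localization.Away (f j) →+* Localization.Away (f i * f j) :=
  Localization.awayLift (algebraMap R _) (f j)
    (isUnit_of_mul_isUnit_right (x := algebraMap R (Localization.Away (f i * f j)) (f i))
      (by rw [← map_mul]; exact IsLocalization.Away.algebraMap_isUnit _))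

open Filter IsLocalization.Away

section

variable {R : Type*} [CommSemiring R]

lemma IsLocalization.Away.eventually_pow_mul_eq {x : R} {S : Type*} [CommSemiring S] [Algebra R S]
    [IsLocalization.Away x S] {a b : R} (h : algebraMap R S a = algebraMap R S b) :
    ∀ᶠ n in atTop, x ^ n * a = x ^ n * b := by
  obtain ⟨m, hm⟩ := exists_of_eq x h
  filter_upwards [eventually_ge_atTop m] with n hn
  obtain ⟨k, rfl⟩ := Nat.exists_eq_add_of_le hn
  rw [pow_add, mul_right_comm, mul_right_comm _ _ b, hm]

lemma IsLocalization.Away.eventually_exists_mul_pow_eq {x : R} {S : Type*} [CommSemiring S]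
    [Algebra R S] [IsLocalization.Away x S] (z : S) :
    ∀ᶠ n in atTop, ∃ r : R, z * algebraMap R S (x ^ n) = algebraMap R S r := by
  obtain ⟨m, r, hr⟩ := surj x z
  filter_upwards [eventually_ge_atTop m] with n hn
  obtain ⟨k, rfl⟩ := Nat.exists_eq_add_of_le hn
  refine ⟨x ^ k * r, ?_⟩
  rw [map_mul, ← hr, map_pow, map_pow]
  ring

lemma Localization.Away.eventually_cross_mul_eq {a b r s : R} {N : ℕ} {x : Away a} {y : Away b}
    (hx : x * algebraMap R _ (a ^ N) = algebraMap R _ r)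
    (hy : y * algebraMap R _ (b ^ N) = algebraMap R _ s)
    (h : awayToAwayRight (P := Away (a * b)) a b x = awayToAwayLeft b a y) :
    ∀ᶠ K in atTop, a ^ K * r * b ^ (K + N) = b ^ K * s * a ^ (K + N) := by
  have hr : algebraMap R (Away (a * b)) r = awayToAwayRight a b x * algebraMap R _ (a ^ N) := by
    rw [← awayToAwayRight_eq (S := Away a) a b r, ← hx, map_mul, awayToAwayRight_eq]
  have hs : algebraMap R (Away (a * b)) s = awayToAwayLeft b a y * algebraMap R _ (b ^ N) := by
    rw [← awayToAwayLeft_eq (S := Away b) b a s, ← hy, map_mul, awayToAwayLeft_eq]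
  have hrs : algebraMap R (Away (a * b)) (r * b ^ N) = algebraMap R _ (s * a ^ N) := by
    rw [map_mul, map_mul, hr, hs, h]
    ring
  filter_upwards [eventually_pow_mul_eq (x := a * b) hrs] with K hK
  calc a ^ K * r * b ^ (K + N) = (a * b) ^ K * (r * b ^ N) := by ring
    _ = (a * b) ^ K * (s * a ^ N) := hK
    _ = b ^ K * s * a ^ (K + N) := by ring

lemma exists_sum_mul_pow_eq_one {ι : Type*} [Fintype ι] {f : ι → R}
    (hf : Ideal.span (Set.range f) = ⊤) (N : ℕ) : ∃ c : ι → R, ∑ i, c i * f i ^ N = 1 := by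
  have hpow := Ideal.span_pow_eq_top _ hf N
  rw [← Set.range_comp] at hpow
  exact (Submodule.mem_span_range_iff_exists_fun _).mp ((Ideal.eq_top_iff_one _).mp hpow)

lemma sum_mul_mul_pow_eq_of_cross_mul_eq {ι : Type*} [Fintype ι] {f r c : ι → R} {N : ℕ}
    (hc : ∑ j, c j * f j ^ N = 1) (hr : ∀ i j, r i * f j ^ N = r j * f i ^ N) (i : ι) :
    (∑ j, c j * r j) * f i ^ N = r i :=
  calc (∑ j, c j * r j) * f i ^ N = ∑ j, c j * (r j * f i ^ N) := by
        simp only [Finset.sum_mul, mul_assoc]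
    _ = ∑ j, c j * (r i * f j ^ N) := by simp only [hr]
    _ = r i * ∑ j, c j * f j ^ N := by
        rw [Finset.mul_sum]
        exact Finset.sum_congr rfl fun j _ => by ring
    _ = r i := by rw [hc, mul_one]

theorem algebraMap_injective_of_span_range_eq_top {ι : Type*} (f : ι → R)
    (hf : Ideal.span (Set.range f) = ⊤) :
    Function.Injective fun (g : R) (i : ι) => algebraMap R (Away (f i)) g :=
  fun _ _ h => algebraMap_injective_of_span_eq_top _ hf (funext fun ⟨_, i, rfl⟩ => congr_fun h i)

theorem exists_algebraMap_eq_of_span_range_eq_top {ι : Type*} [Finite ι] (f : ι → R)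
    (hf : Ideal.span (Set.range f) = ⊤) (x : ∀ i, Away (f i))
    (hx : ∀ i j, awayToAwayRight (P := Away (f i * f j)) (f i) (f j) (x i) =
      awayToAwayLeft (f j) (f i) (x j)) :
    ∃ g : R, ∀ i, algebraMap R _ g = x i := by
  have := Fintype.ofFinite ι
  obtain ⟨N, hN⟩ :=
    (eventually_all.2 fun i => eventually_exists_mul_pow_eq (x := f i) (x i)).exists
  choose r hr using hN
  obtain ⟨K, hK⟩ := (eventually_all.2 fun p : ι × ι =>
    Away.eventually_cross_mul_eq (hr p.1) (hr p.2) (hx p.1 p.2)).exists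
  obtain ⟨c, hc⟩ := exists_sum_mul_pow_eq_one hf (K + N)
  refine ⟨∑ j, c j * (f j ^ K * r j), fun i => ?_⟩
  refine ((algebraMap_isUnit (f i)).pow (K + N)).mul_left_inj.mp ?_
  rw [← map_pow, ← map_mul, sum_mul_mul_pow_eq_of_cross_mul_eq hc (fun i j => hK (i, j)) i,
    pow_add, map_mul, map_mul, ← hr i]
  ring

end

/-- For a unimodular vector `f₁,…,fₙ : R`, the map `g ↦ (g/1)ᵢ` is an
isomorphism of `R` onto the set of families `xᵢ ∈ R[1/fᵢ]` agreeing in `R[1/(fᵢfⱼ)]`: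
it is injective, its image consists of compatible families, and every compatible
family comes from a (unique) `g : R`. -/
theorem localization_equalizer_iso {R : Type*} [CommRing R] {n : ℕ} (f : Fin n → R)
    (hf : (1 : R) ∈ Ideal.span (Set.range f)) :
    (Function.Injective fun (g : R) (i : Fin n) =>
        algebraMap R (Localization.Away (f i)) g) ∧
    (∀ (g : R) (i j : Fin n),
        chiL f i j (algebraMap R (Localization.Away (f i)) g) =
          chiR f i j (algebraMap R (Localization.Away (f j)) g)) ∧
    (∀ x : (i : Fin n) → Localization.Away (f i),
        (∀ i j, chiL f i j (x i) = chiR f i j (x j)) →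
        ∃ g : R, ∀ i, algebraMap R (Localization.Away (f i)) g = x i) := by
  have hspan : Ideal.span (Set.range f) = ⊤ := (Ideal.eq_top_iff_one _).mpr hf
  -- `chiL f i j` and `chiR f i j` are definitionally `awayToAwayRight` and `awayToAwayLeft`.
  exact ⟨algebraMap_injective_of_span_range_eq_top f hspan,
    fun g i j => (awayToAwayRight_eq (f i) (f j) g).trans (awayToAwayLeft_eq (f j) (f i) g).symm,
    exists_algebraMap_eq_of_span_range_eq_top f hspan⟩
end

section
/- The Zariski coverage is subcanonical: for any commutative ring A, the representable presheaf Sp(A) = Hom(A, −) on CommRing^op is a sheaf with respect to the Zariski coverage; concretely, for every ring R and unimodular vector f₁,…,fₙ : R, the map Hom(A,R) → {compatible families of homomorphisms φᵢ : A → R[1/fᵢ]} given by postcomposition with the localization maps is an isomorphism. -/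
/-!
Since the localization maps `R → R[1/fᵢ]` are jointly injective, a compatible family `φᵢ`
comes from a ring homomorphism `A → R` as soon as each `a : A` has a preimage `r : R` with
`r ↦ φᵢ a` for all `i`; that elementwise gluing is the sheaf property of the structure sheaf
on the standard cover `D(fᵢ)` of `Spec R`.
-/

open Localization

theorem RingHom.existsUnique_forall_comp_eq {A R : Type*} [Ring A] [Ring R] {ι : Type*}
    {S : ι → Type*} [∀ i, Ring (S i)] (g : ∀ i, R →+* S i)
    (hg : ∀ r s, (∀ i, g i r = g i s) → r = s) (φ : ∀ i, A →+* S i)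
    (hφ : ∀ a, ∃ r, ∀ i, g i r = φ i a) :
    ∃! ψ : A →+* R, ∀ i, (g i).comp ψ = φ i := by
  choose r hr using hφ
  let ψ : A →+* R :=
    { toFun := r
      map_one' := hg _ _ fun i => by rw [hr, map_one, map_one]
      map_mul' := fun a b => hg _ _ fun i => by rw [hr, map_mul, map_mul, hr, hr]
      map_zero' := hg _ _ fun i => by rw [hr, map_zero, map_zero]
      map_add' := fun a b => hg _ _ fun i => by rw [hr, map_add, map_add, hr, hr] }
  refine ⟨ψ, fun i => RingHom.ext fun a => hr a i, fun ψ' hψ' => RingHom.ext fun a => ?_⟩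
  exact hg _ _ fun i => (DFunLike.congr_fun (hψ' i) a).trans (hr a i).symm

namespace IsLocalization.Away

variable {R S P : Type*} [CommRing R] [CommRing S] [Algebra R S] [CommRing P] [Algebra R P]

/-- When `y` is already invertible in `S = R[1/x]`, the map `R[1/x] → R[1/(xy)]` has a
retraction, namely the lift of `R → R[1/x]` along `R → R[1/(xy)]`. -/
theorem awayToAwayRight_injective (x y : R) [IsLocalization.Away x S]
    [IsLocalization.Away (x * y) P] (hy : IsUnit (algebraMap R S y)) :
    Function.Injective (awayToAwayRight (S := S) (P := P) x y) := by
  have hxy : IsUnit (algebraMap R S (x * y)) := by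
    rw [map_mul]; exact (algebraMap_isUnit x).mul hy
  refine Function.LeftInverse.injective (g := lift (S := P) (x * y) hxy) fun s => ?_
  have hretract : (lift (S := P) (x * y) hxy).comp (awayToAwayRight x y) = RingHom.id S :=
    IsLocalization.ringHom_ext (Submonoid.powers x) <| RingHom.ext fun r => by
      simp only [RingHom.comp_apply, awayToAwayRight_eq, lift_eq, RingHom.id_apply]
  exact DFunLike.congr_fun hretract s

end IsLocalization.Away

namespace Localization

variable {R : Type*} [CommRing R]

/-- Needed because `f` may repeat values, so a family over `ι` is not literally a family over
the set `Set.range f`. -/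
noncomputable def awayCast {a b : R} (h : a = b) : Away a →+* Away b :=
  h ▸ RingHom.id _

theorem algebraMap_eq_awayCast_iff {a b : R} (h : a = b) (r : R) (x : Away a) :
    algebraMap R (Away b) r = awayCast h x ↔ algebraMap R (Away a) r = x := by
  subst h; rfl

theorem awayToAwayRight_awayCast_eq {a a' b b' : R} (ha : a = a') (hb : b = b')
    {x : Away a} {y : Away b}
    (hxy : IsLocalization.Away.awayToAwayRight (P := Away (a * b)) a b x =
      IsLocalization.Away.awayToAwayLeft b a y) :
    IsLocalization.Away.awayToAwayRight (P := Away (a' * b')) a' b' (awayCast ha x) =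
      IsLocalization.Away.awayToAwayLeft b' a' (awayCast hb y) := by
  subst ha hb; exact hxy

variable {ι : Type*} (f : ι → R)

theorem eq_of_forall_algebraMap_eq (hf : Ideal.span (Set.range f) = ⊤) (r s : R)
    (h : ∀ i, algebraMap R (Away (f i)) r = algebraMap R (Away (f i)) s) : r = s :=
  algebraMap_injective_of_span_eq_top _ hf <| funext fun ⟨_, i, hi⟩ => by subst hi; exact h i

theorem existsUnique_algebraMap_eq_of_span_range_eq_top (hf : Ideal.span (Set.range f) = ⊤)
    (x : ∀ i, Away (f i))
    (hx : ∀ i j, IsLocalization.Away.awayToAwayRight (P := Away (f i * f j)) (f i) (f j) (x i) =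
      IsLocalization.Away.awayToAwayLeft (f j) (f i) (x j)) :
    ∃! r : R, ∀ i, algebraMap R (Away (f i)) r = x i := by
  refine existsUnique_of_exists_of_unique ?_ fun r s hr hs =>
    eq_of_forall_algebraMap_eq f hf r s fun i => (hr i).trans (hs i).symm
  let index (b : Set.range f) : ι := b.2.choose
  have f_index (b : Set.range f) : f (index b) = b := b.2.choose_spec
  obtain ⟨r, hr, -⟩ := existsUnique_algebraMap_eq_of_span_eq_top _ hf
    (fun b => awayCast (f_index b) (x (index b)))
    fun b c => awayToAwayRight_awayCast_eq _ _ (hx _ _)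
  refine ⟨r, fun i => ?_⟩
  -- compare `x i` with `x j` for the chosen index `j` of `f i`, inside `R[1/(fᵢfⱼ)]`
  let j := index ⟨f i, i, rfl⟩
  have hji : f j = f i := f_index _
  have hrj : algebraMap R (Away (f j)) r = x j :=
    (algebraMap_eq_awayCast_iff hji r _).mp (hr ⟨f i, i, rfl⟩)
  have hunit : IsUnit (algebraMap R (Away (f i)) (f j)) := by
    rw [hji]; exact IsLocalization.Away.algebraMap_isUnit _
  apply IsLocalization.Away.awayToAwayRight_injective (P := Away (f i * f j)) (f i) (f j) hunit
  rw [IsLocalization.Away.awayToAwayRight_eq, hx, ← hrj, IsLocalization.Away.awayToAwayLeft_eq]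

end Localization

theorem chiL_eq_awayToAwayRight {R : Type*} [CommRing R] {n : ℕ} (f : Fin n → R) (i j : Fin n) :
    chiL f i j = IsLocalization.Away.awayToAwayRight (P := Localization.Away (f i * f j))
      (f i) (f j) := rfl

theorem chiR_eq_awayToAwayLeft {R : Type*} [CommRing R] {n : ℕ} (f : Fin n → R) (i j : Fin n) :
    chiR f i j = IsLocalization.Away.awayToAwayLeft (P := Localization.Away (f i * f j))
      (f j) (f i) := rfl

/-- The Zariski coverage is subcanonical: for any ring `A` and
unimodular vector `f₁,…,fₙ : R`, the map `Hom(A,R) → {compatible families φᵢ : A → R[1/fᵢ]}`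
given by postcomposition with the localization maps is an isomorphism: it is injective,
lands in compatible families, and every compatible family arises from a unique morphism. -/
theorem zariski_coverage_subcanonical {A R : Type*} [CommRing A] [CommRing R]
    {n : ℕ} (f : Fin n → R) (hf : (1 : R) ∈ Ideal.span (Set.range f)) :
    (Function.Injective fun (ψ : A →+* R) (i : Fin n) =>
        (algebraMap R (Localization.Away (f i))).comp ψ) ∧
    (∀ (ψ : A →+* R) (i j : Fin n),
        (chiL f i j).comp ((algebraMap R (Localization.Away (f i))).comp ψ) =
          (chiR f i j).comp ((algebraMap R (Localization.Away (f j))).comp ψ)) ∧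
    (∀ φ : (i : Fin n) → (A →+* Localization.Away (f i)),
        (∀ i j, (chiL f i j).comp (φ i) = (chiR f i j).comp (φ j)) →
        ∃! ψ : A →+* R, ∀ i, (algebraMap R (Localization.Away (f i))).comp ψ = φ i) := by
  have hspan : Ideal.span (Set.range f) = ⊤ := (Ideal.eq_top_iff_one _).mpr hf
  refine ⟨fun ψ₁ ψ₂ h => RingHom.ext fun a => ?_, fun ψ i j => RingHom.ext fun a => ?_,
    fun φ hφ => ?_⟩
  · exact eq_of_forall_algebraMap_eq f hspan _ _ fun i => DFunLike.congr_fun (congrFun h i) a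
  · simp only [RingHom.comp_apply, chiL_eq_awayToAwayRight, chiR_eq_awayToAwayLeft,
      IsLocalization.Away.awayToAwayRight_eq, IsLocalization.Away.awayToAwayLeft_eq]
  · simp only [chiL_eq_awayToAwayRight, chiR_eq_awayToAwayLeft] at hφ
    exact RingHom.existsUnique_forall_comp_eq _ (eq_of_forall_algebraMap_eq f hspan) φ fun a =>
      (existsUnique_algebraMap_eq_of_span_range_eq_top f hspan (φ · a)
        fun i j => DFunLike.congr_fun (hφ i j) a).exists
end
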